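/- arXiv:2405.13061 — 4 statements merged into one kernel-verified Lean document; each statement's English description precedes it below -/
import Mathlib

section
/- Let (u₁,v₁,w₁) and (u₂,v₂,w₂) be Pythagorean triples and u₀,v₀ positive integers such that (u₀u₂)²+(v₀u₁)² is a perfect square d² and v₀v₁ = u₀v₂. Then a = u₀u₂, b = v₀u₁, c = v₀v₁ form an Euler brick, with face diagonals d, e = u₀w₂, and f = v₀w₁. -/
theorem sq_add_sq_eq_sq_mul_left {R : Type*} [CommSemiring R] {x y z : R} (k : R)
    (h : x ^ 2 + y ^ 2 = z ^ 2) : (k * x) ^ 2 + (k * y) ^ 2 = (k * z) ^ 2 := by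
  rw [mul_pow, mul_pow, mul_pow, ← mul_add, h]

theorem euler_brick_param_thm3_general
    (u₀ v₀ u₁ v₁ w₁ u₂ v₂ w₂ d : ℕ)
    (h₁ : u₁ ^ 2 + v₁ ^ 2 = w₁ ^ 2)
    (h₂ : u₂ ^ 2 + v₂ ^ 2 = w₂ ^ 2)
    (hd : (u₀ * u₂) ^ 2 + (v₀ * u₁) ^ 2 = d ^ 2)
    (hc : v₀ * v₁ = u₀ * v₂) :
    (u₀ * u₂) ^ 2 + (v₀ * u₁) ^ 2 = d ^ 2 ∧
    (u₀ * u₂) ^ 2 + (v₀ * v₁) ^ 2 = (u₀ * w₂) ^ 2 ∧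
    (v₀ * u₁) ^ 2 + (v₀ * v₁) ^ 2 = (v₀ * w₁) ^ 2 := by
  refine ⟨hd, ?_, sq_add_sq_eq_sq_mul_left v₀ h₁⟩
  rw [hc]
  exact sq_add_sq_eq_sq_mul_left u₀ h₂

theorem euler_brick_param_thm3
    (u₀ v₀ u₁ v₁ w₁ u₂ v₂ w₂ d : ℕ)
    (hu₀ : 0 < u₀) (hv₀ : 0 < v₀)
    (hu₁ : 0 < u₁) (hv₁ : 0 < v₁) (hw₁ : 0 < w₁)
    (hu₂ : 0 < u₂) (hv₂ : 0 < v₂) (hw₂ : 0 < w₂)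
    (h₁ : u₁ ^ 2 + v₁ ^ 2 = w₁ ^ 2)
    (h₂ : u₂ ^ 2 + v₂ ^ 2 = w₂ ^ 2)
    (hd : (u₀ * u₂) ^ 2 + (v₀ * u₁) ^ 2 = d ^ 2)
    (hc : v₀ * v₁ = u₀ * v₂) :
    (u₀ * u₂) ^ 2 + (v₀ * u₁) ^ 2 = d ^ 2 ∧
    (u₀ * u₂) ^ 2 + (v₀ * v₁) ^ 2 = (u₀ * w₂) ^ 2 ∧
    (v₀ * u₁) ^ 2 + (v₀ * v₁) ^ 2 = (v₀ * w₁) ^ 2 :=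
  euler_brick_param_thm3_general u₀ v₀ u₁ v₁ w₁ u₂ v₂ w₂ d h₁ h₂ hd hc
end

section
/- (Sounderson parametrization) Let u,v,w be positive integers with u²+v²=w². Then a = |u(4v²−w²)|, b = |v(4u²−w²)|, c = 4uvw satisfy a²+b² = (w³)², a²+c² = (u(4v²+w²))², and b²+c² = (v(4u²+w²))²; in particular (a,b,c) is an Euler brick (provided a,b,c are nonzero). -/
/-- With `s = u²`, `t = v²` and `w² = s + t` this is `s (3t - s)² + t (3s - t)² = (s + t)³`. -/
theorem sq_add_sq_eq_cube_sq_of_sq_add_sq {R : Type*} [CommRing R] {u v w : R}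
    (h : u ^ 2 + v ^ 2 = w ^ 2) :
    (u * (4 * v ^ 2 - w ^ 2)) ^ 2 + (v * (4 * u ^ 2 - w ^ 2)) ^ 2 = (w ^ 3) ^ 2 := by
  linear_combination (16 * u ^ 2 * v ^ 2 + w ^ 4) * h

theorem sq_mul_sub_add_sq_eq {R : Type*} [CommRing R] (u v w : R) :
    (u * (4 * v ^ 2 - w ^ 2)) ^ 2 + (4 * u * v * w) ^ 2 = (u * (4 * v ^ 2 + w ^ 2)) ^ 2 := by
  ring

theorem sounderson_parametrization_general
    (u v w : ℤ)
    (h : u ^ 2 + v ^ 2 = w ^ 2) :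
    (|u * (4 * v ^ 2 - w ^ 2)|) ^ 2 + (|v * (4 * u ^ 2 - w ^ 2)|) ^ 2 = (w ^ 3) ^ 2 ∧
    (|u * (4 * v ^ 2 - w ^ 2)|) ^ 2 + (4 * u * v * w) ^ 2 = (u * (4 * v ^ 2 + w ^ 2)) ^ 2 ∧
    (|v * (4 * u ^ 2 - w ^ 2)|) ^ 2 + (4 * u * v * w) ^ 2 = (v * (4 * u ^ 2 + w ^ 2)) ^ 2 := by
  simp only [sq_abs]
  refine ⟨sq_add_sq_eq_cube_sq_of_sq_add_sq h, sq_mul_sub_add_sq_eq u v w, ?_⟩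
  rw [mul_right_comm 4 u v]
  exact sq_mul_sub_add_sq_eq v u w

theorem sounderson_parametrization
    (u v w : ℤ) (hu : 0 < u) (hv : 0 < v) (hw : 0 < w)
    (h : u ^ 2 + v ^ 2 = w ^ 2) :
    (|u * (4 * v ^ 2 - w ^ 2)|) ^ 2 + (|v * (4 * u ^ 2 - w ^ 2)|) ^ 2 = (w ^ 3) ^ 2 ∧
    (|u * (4 * v ^ 2 - w ^ 2)|) ^ 2 + (4 * u * v * w) ^ 2 = (u * (4 * v ^ 2 + w ^ 2)) ^ 2 ∧
    (|v * (4 * u ^ 2 - w ^ 2)|) ^ 2 + (4 * u * v * w) ^ 2 = (v * (4 * u ^ 2 + w ^ 2)) ^ 2 :=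
  sounderson_parametrization_general u v w h
end

section
/- Let (x,y,z) and (u,v,w) be Pythagorean triples (x²+y²=z², u²+v²=w²) with all entries positive. If both (zu)²+(yv)² and (zv)²+(yu)² are perfect squares, say e² and f², then a = xu, b = xv, c = yw form a perfect Euler brick: a²+b² = (xw)², a²+c² = e², b²+c² = f², and a²+b²+c² = (wz)². -/
theorem perfect_euler_brick_from_system
    (x y z u v w e f : ℕ)
    (hx : 0 < x) (hy : 0 < y) (hz : 0 < z)
    (hu : 0 < u) (hv : 0 < v) (hw : 0 < w)
    (h₁ : x ^ 2 + y ^ 2 = z ^ 2)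
    (h₂ : u ^ 2 + v ^ 2 = w ^ 2)
    (he : (z * u) ^ 2 + (y * v) ^ 2 = e ^ 2)
    (hf : (z * v) ^ 2 + (y * u) ^ 2 = f ^ 2) :
    (x * u) ^ 2 + (x * v) ^ 2 = (x * w) ^ 2 ∧
    (x * u) ^ 2 + (y * w) ^ 2 = e ^ 2 ∧
    (x * v) ^ 2 + (y * w) ^ 2 = f ^ 2 ∧
    (x * u) ^ 2 + (x * v) ^ 2 + (y * w) ^ 2 = (w * z) ^ 2 := by
  zify at *
  refine ⟨by linear_combination x^2 * h₂, by linear_combination u^2 * h₁ + he - y^2 * h₂,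
    by linear_combination v^2 * h₁ + hf - y^2 * h₂, by linear_combination w^2 * h₁ + x^2 * h₂⟩
end

section
/- Let (u₀,v₀,w₀) be a Pythagorean triple with u₀,v₀,w₀ positive. Setting (u₁,v₁,w₁) = (|4u₀²−w₀²|, 4u₀w₀, 4u₀²+w₀²) and (u₂,v₂,w₂) = (|4v₀²−w₀²|, 4v₀w₀, 4v₀²+w₀²), these are Pythagorean triples satisfying the compatibility condition v₀v₁ = u₀v₂, and moreover (u₀u₂)² + (v₀u₁)² = (w₀³)². -/
theorem sounderson_special_case
    (u₀ v₀ w₀ : ℤ) (hu₀ : 0 < u₀) (hv₀ : 0 < v₀) (hw₀ : 0 < w₀)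
    (h : u₀ ^ 2 + v₀ ^ 2 = w₀ ^ 2) :
    (|4 * u₀ ^ 2 - w₀ ^ 2|) ^ 2 + (4 * u₀ * w₀) ^ 2 = (4 * u₀ ^ 2 + w₀ ^ 2) ^ 2 ∧
    (|4 * v₀ ^ 2 - w₀ ^ 2|) ^ 2 + (4 * v₀ * w₀) ^ 2 = (4 * v₀ ^ 2 + w₀ ^ 2) ^ 2 ∧
    v₀ * (4 * u₀ * w₀) = u₀ * (4 * v₀ * w₀) ∧
    (u₀ * |4 * v₀ ^ 2 - w₀ ^ 2|) ^ 2 + (v₀ * |4 * u₀ ^ 2 - w₀ ^ 2|) ^ 2 = (w₀ ^ 3) ^ 2 := by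
  refine ⟨?_, ?_, by ring, ?_⟩
  · rw [sq_abs]; ring
  · rw [sq_abs]; ring
  · rw [mul_pow, mul_pow, sq_abs, sq_abs]; linear_combination (w₀ ^ 4 + 16 * u₀ ^ 2 * v₀ ^ 2) * h
end
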